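/- arXiv:2305.10695 — 3 statements merged into one kernel-verified Lean document; each statement's English description precedes it below -/
import Mathlib

section
/- Let h : ℝ → ℝ be a strictly increasing continuous bijection with h(0) = 0, and let Z be standard normal. For fixed y > 0, the function σ ↦ P(h(σZ)² ≤ y) = N(h⁻¹(√y)/σ) − N(h⁻¹(−√y)/σ) is (strictly) decreasing in σ on (0,∞). -/
open MeasureTheory ProbabilityTheory

theorem prob_h_sq_le_strictAnti
    {Ω : Type*} [MeasurableSpace Ω] (P : Measure Ω) [IsProbabilityMeasure P]
    (Z : Ω → ℝ) (hZmeas : Measurable Z) (hZ : Measure.map Z P = gaussianReal 0 1)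
    (N : ℝ → ℝ)
    (hN : ∀ x : ℝ, N x = ∫ t in Set.Iic x, (Real.sqrt (2 * Real.pi))⁻¹ * Real.exp (-t ^ 2 / 2))
    (h : ℝ → ℝ) (hmono : StrictMono h) (hcont : Continuous h)
    (hbij : Function.Bijective h) (h0 : h 0 = 0)
    (y : ℝ) (hy : 0 < y) :
    (∀ σ : ℝ, 0 < σ →
      P {ω | (h (σ * Z ω)) ^ 2 ≤ y}
        = ENNReal.ofReal (N (Function.invFun h (Real.sqrt y) / σ)
            - N (Function.invFun h (-Real.sqrt y) / σ))) ∧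
    StrictAntiOn
      (fun σ : ℝ => N (Function.invFun h (Real.sqrt y) / σ)
        - N (Function.invFun h (-Real.sqrt y) / σ))
      (Set.Ioi 0) := by
  set a := Function.invFun h (Real.sqrt y) with ha_def
  set b := Function.invFun h (-Real.sqrt y) with hb_def
  have hsqrt_pos : 0 < Real.sqrt y := Real.sqrt_pos.mpr hy
  have hha : h a = Real.sqrt y := Function.rightInverse_invFun hbij.surjective _
  have hhb : h b = -Real.sqrt y := Function.rightInverse_invFun hbij.surjective _
  have hapos : 0 < a := by
    have := hmono.lt_iff_lt (a := 0) (b := a)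
    rw [h0, hha] at this
    exact this.mp hsqrt_pos
  have hbneg : b < 0 := by
    have := hmono.lt_iff_lt (a := b) (b := 0)
    rw [h0, hhb] at this
    exact this.mp (by linarith)
  -- the gaussian pdf
  have hf_eq : ∀ t : ℝ, gaussianPDFReal 0 1 t
      = (Real.sqrt (2 * Real.pi))⁻¹ * Real.exp (-t ^ 2 / 2) := by
    intro t
    simp [gaussianPDFReal]
  have hN' : ∀ x : ℝ, N x = ∫ t in Set.Iic x, gaussianPDFReal 0 1 t := by
    intro x
    rw [hN x]
    exact setIntegral_congr_fun measurableSet_Iic fun t _ => (hf_eq t).symm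
  have hint : Integrable (gaussianPDFReal 0 1) := integrable_gaussianPDFReal 0 1
  -- N difference as interval integral
  have hNdiff : ∀ u v : ℝ, u ≤ v →
      N v - N u = ∫ t in Set.Ioc u v, gaussianPDFReal 0 1 t := by
    intro u v huv
    rw [hN' u, hN' v,
      intervalIntegral.integral_Iic_sub_Iic hint.integrableOn hint.integrableOn,
      intervalIntegral.integral_of_le huv]
  have hNmono : StrictMono N := by
    intro u v huv
    have hpos : (0:ℝ) < ∫ t in Set.Ioc u v, gaussianPDFReal 0 1 t := by
      rw [← intervalIntegral.integral_of_le huv.le]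
      exact intervalIntegral.intervalIntegral_pos_of_pos (hint.intervalIntegrable)
        (fun x => gaussianPDFReal_pos 0 1 x one_ne_zero) huv
    have := hNdiff u v huv.le
    linarith
  constructor
  · intro σ hσ
    have hset : {ω | (h (σ * Z ω)) ^ 2 ≤ y} = Z ⁻¹' Set.Icc (b / σ) (a / σ) := by
      ext ω
      simp only [Set.mem_setOf_eq, Set.mem_preimage, Set.mem_Icc]
      have h1 : (h (σ * Z ω)) ^ 2 ≤ y ↔ |h (σ * Z ω)| ≤ Real.sqrt y := by
        rw [← Real.sqrt_sq_eq_abs, Real.sqrt_le_sqrt_iff hy.le]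
      rw [h1, abs_le, ← hhb, ← hha, hmono.le_iff_le, hmono.le_iff_le,
        mul_comm σ (Z ω), ← div_le_iff₀ hσ, ← le_div_iff₀ hσ]
    have hmap : P (Z ⁻¹' Set.Icc (b / σ) (a / σ)) = (Measure.map Z P) (Set.Icc (b / σ) (a / σ)) := by
      rw [Measure.map_apply hZmeas measurableSet_Icc]
    rw [hset, hmap, hZ, gaussianReal_apply_eq_integral 0 one_ne_zero]
    congr 1
    rw [MeasureTheory.integral_Icc_eq_integral_Ioc]
    have hle : b / σ ≤ a / σ := by
      gcongr
      exact (hbneg.trans hapos).le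
    rw [hNdiff _ _ hle]
  · intro σ₁ h1 σ₂ h2 hlt
    simp only [Set.mem_Ioi] at h1 h2
    have ha' : a / σ₂ < a / σ₁ := div_lt_div_of_pos_left hapos h1 hlt
    have hb' : b / σ₁ < b / σ₂ := by
      have : (-b) / σ₂ < (-b) / σ₁ := div_lt_div_of_pos_left (by linarith) h1 hlt
      rw [neg_div, neg_div] at this
      linarith
    have := hNmono ha'
    have := hNmono hb'
    simp only
    linarith
end

section
/- Let W be a standard Brownian motion and h = F^{-1} ∘ N with F the Student t(2) CDF and N the standard normal CDF. Then for every s ≥ 1, E[h(W_s)²] = ∞. -/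
open MeasureTheory ProbabilityTheory Real Set Filter
open scoped ENNReal NNReal

noncomputable def phi (t : ℝ) : ℝ := (Real.sqrt (2 * Real.pi))⁻¹ * Real.exp (-t ^ 2 / 2)

lemma phi_eq_pdf : phi = gaussianPDFReal 0 1 := by
  ext t
  simp [phi, gaussianPDFReal]

lemma phi_pos (t : ℝ) : 0 < phi t := by
  have : 0 < Real.sqrt (2 * Real.pi) := Real.sqrt_pos.2 (by positivity)
  exact mul_pos (inv_pos.2 this) (Real.exp_pos _)

lemma phi_integrable : Integrable phi := by
  rw [phi_eq_pdf]; exact integrable_gaussianPDFReal 0 1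

lemma phi_integral_one : ∫ t, phi t = 1 := by
  rw [phi_eq_pdf]; exact integral_gaussianPDFReal_eq_one 0 one_ne_zero

lemma phi_continuous : Continuous phi := by
  unfold phi; fun_prop

lemma negphi_tendsto : Filter.Tendsto (fun u => -phi u) Filter.atTop (nhds 0) := by
  have h1 : Filter.Tendsto (fun u : ℝ => -u ^ 2 / 2) Filter.atTop Filter.atBot := by
    apply Filter.Tendsto.atBot_div_const (by norm_num)
    exact Filter.tendsto_neg_atBot_iff.2 (Filter.tendsto_pow_atTop (by norm_num))
  have h2 : Filter.Tendsto phi Filter.atTop (nhds ((Real.sqrt (2 * Real.pi))⁻¹ * 0)) :=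
    Filter.Tendsto.const_mul _ (Real.tendsto_exp_atBot.comp h1)
  rw [mul_zero] at h2
  simpa using h2.neg

lemma negphi_hasDeriv (t : ℝ) : HasDerivAt (fun u => -phi u) (t * phi t) t := by
  have h1 : HasDerivAt (fun u : ℝ => -u ^ 2 / 2) (-t) t := by
    have : HasDerivAt (fun u : ℝ => -u ^ 2 / 2) _ t := ((hasDerivAt_pow 2 t).neg).div_const 2
    convert this using 1
    ring
  have h2 : HasDerivAt (fun u : ℝ => Real.exp (-u ^ 2 / 2)) (Real.exp (-t ^ 2 / 2) * (-t)) t :=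
    (Real.hasDerivAt_exp _).comp t h1
  have h3 := (h2.const_mul ((Real.sqrt (2 * Real.pi))⁻¹)).neg
  have h4 : t * phi t = -((Real.sqrt (2 * Real.pi))⁻¹ * (Real.exp (-t ^ 2 / 2) * (-t))) := by
    simp [phi]; ring
  rw [h4]
  exact h3

lemma tphi_integrableOn (x : ℝ) (hx : 0 < x) : IntegrableOn (fun t => t * phi t) (Ioi x) :=
  integrableOn_Ioi_deriv_of_nonneg' (fun t _ => negphi_hasDeriv t)
    (fun t ht => mul_nonneg (hx.le.trans ht.out.le) (phi_pos t).le) negphi_tendsto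

lemma tphi_integral (x : ℝ) (hx : 0 < x) : ∫ t in Ioi x, t * phi t = phi x := by
  have := integral_Ioi_of_hasDerivAt_of_tendsto' (fun t _ => negphi_hasDeriv t)
    (tphi_integrableOn x hx) negphi_tendsto
  simpa using this

lemma tail_le_phi_div (x : ℝ) (hx : 1 ≤ x) : ∫ t in Ioi x, phi t ≤ phi x / x := by
  have hx0 : 0 < x := by linarith
  have h1 : ∫ t in Ioi x, phi t ≤ ∫ t in Ioi x, x⁻¹ * (t * phi t) := by
    refine setIntegral_mono_on phi_integrable.integrableOn
      ((tphi_integrableOn x hx0).const_mul x⁻¹) measurableSet_Ioi ?_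
    intro t ht
    have htx : x ≤ t := ht.out.le
    have h1t : (1 : ℝ) ≤ x⁻¹ * t := by
      calc (1:ℝ) = x⁻¹ * x := by field_simp
        _ ≤ x⁻¹ * t := by
            exact mul_le_mul_of_nonneg_left htx (inv_pos.2 hx0).le
    calc phi t = 1 * phi t := (one_mul _).symm
      _ ≤ x⁻¹ * (t * phi t) := by
          rw [← mul_assoc]
          exact mul_le_mul_of_nonneg_right h1t (phi_pos t).le
  rw [MeasureTheory.integral_const_mul, tphi_integral x hx0] at h1
  rw [div_eq_inv_mul]
  exact h1

noncomputable def Nstd (x : ℝ) : ℝ := ∫ t in Iic x, phi t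

lemma Nstd_add_tail (x : ℝ) : Nstd x + ∫ t in Ioi x, phi t = 1 :=
  (intervalIntegral.integral_Iic_add_Ioi phi_integrable.integrableOn phi_integrable.integrableOn).trans
    phi_integral_one

lemma tail_pos (x : ℝ) : 0 < ∫ t in Ioi x, phi t := by
  rw [setIntegral_pos_iff_support_of_nonneg_ae
    (Filter.Eventually.of_forall fun t => (phi_pos t).le) phi_integrable.integrableOn]
  have : Function.support phi = Set.univ := by
    ext t; simp [(phi_pos t).ne']
  rw [this, Set.univ_inter, Real.volume_Ioi]
  exact ENNReal.zero_lt_top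

lemma Nstd_pos (x : ℝ) : 0 < Nstd x := by
  rw [Nstd, setIntegral_pos_iff_support_of_nonneg_ae
    (Filter.Eventually.of_forall fun t => (phi_pos t).le) phi_integrable.integrableOn]
  have : Function.support phi = Set.univ := by
    ext t; simp [(phi_pos t).ne']
  rw [this, Set.univ_inter, Real.volume_Iic]
  exact ENNReal.zero_lt_top

lemma Nstd_lt_one (x : ℝ) : Nstd x < 1 := by
  have := Nstd_add_tail x
  have := tail_pos x
  linarith

lemma Nstd_mono : Monotone Nstd := by
  intro a b hab
  have h := intervalIntegral.integral_Iic_sub_Iic (μ := volume) (f := phi)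
    phi_integrable.integrableOn phi_integrable.integrableOn (a := a) (b := b)
  have h2 : 0 ≤ ∫ t in a..b, phi t :=
    intervalIntegral.integral_nonneg hab fun t _ => (phi_pos t).le
  have : Nstd b - Nstd a = ∫ t in a..b, phi t := h
  linarith

lemma Nstd_zero : Nstd 0 = 1 / 2 := by
  have h1 : (∫ t in Iic (0:ℝ), phi (-t)) = ∫ t in Ioi (-(0:ℝ)), phi t :=
    integral_comp_neg_Iic 0 phi
  have h2 : ∀ t : ℝ, phi (-t) = phi t := fun t => by simp [phi]
  simp only [h2, neg_zero] at h1
  have h3 := Nstd_add_tail 0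
  rw [Nstd] at *
  linarith [h1]

lemma Nstd_one_gt : 1 / 2 < Nstd 1 := by
  have h := intervalIntegral.integral_Iic_sub_Iic (μ := volume) (f := phi)
    phi_integrable.integrableOn phi_integrable.integrableOn (a := (0:ℝ)) (b := 1)
  have h2 : 0 < ∫ t in (0:ℝ)..1, phi t :=
    intervalIntegral.intervalIntegral_pos_of_pos
      (phi_integrable.intervalIntegrable) phi_pos one_pos
  have h3 : Nstd 1 - Nstd 0 = ∫ t in (0:ℝ)..1, phi t := h
  rw [Nstd_zero] at h3
  linarith
theorem bm_h_infinite_second_moment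
    {Ω : Type*} [MeasurableSpace Ω] (P : Measure Ω) [IsProbabilityMeasure P]
    (W : ℝ → Ω → ℝ)
    (hW : ∀ s : ℝ, 0 ≤ s → Measure.map (W s) P = gaussianReal 0 (Real.toNNReal s))
    (N : ℝ → ℝ)
    (hN : ∀ x : ℝ, N x = ∫ t in Set.Iic x, (Real.sqrt (2 * Real.pi))⁻¹ * Real.exp (-t ^ 2 / 2))
    (F : ℝ → ℝ)
    (hF : ∀ x : ℝ, F x = 1 / 2 + x / (2 * Real.sqrt (2 + x ^ 2)))
    (h : ℝ → ℝ)
    (hh : ∀ x : ℝ, F (h x) = N x) :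
    ∀ s : ℝ, 1 ≤ s → (∫⁻ ω, ENNReal.ofReal ((h (W s ω)) ^ 2) ∂P) = ⊤ := by
  intro s hs
  have hs0 : (0:ℝ) ≤ s := by linarith
  have hNeq : ∀ x, N x = Nstd x := fun x => hN x
  have hN01 : ∀ x, 0 < N x ∧ N x < 1 := fun x => by
    rw [hNeq]; exact ⟨Nstd_pos x, Nstd_lt_one x⟩
  -- the formula for h x ^ 2
  have hsqmul : ∀ x : ℝ, h x ^ 2 * (4 * (N x * (1 - N x))) = 8 * (N x - 1/2) ^ 2 := by
    intro x
    have hfx := hh x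
    rw [hF] at hfx
    have h2y : (0:ℝ) < 2 + h x ^ 2 := by positivity
    have hr2 : Real.sqrt (2 + h x ^ 2) ^ 2 = 2 + h x ^ 2 := Real.sq_sqrt h2y.le
    have hy : h x = (N x - 1/2) * (2 * Real.sqrt (2 + h x ^ 2)) := by
      have hdiv : h x / (2 * Real.sqrt (2 + h x ^ 2)) = N x - 1/2 := by linarith
      exact (div_eq_iff (by positivity)).1 hdiv
    have hysq : h x ^ 2 = (N x - 1/2) ^ 2 * (4 * (2 + h x ^ 2)) := by
      calc h x ^ 2 = ((N x - 1/2) * (2 * Real.sqrt (2 + h x ^ 2))) ^ 2 := by rw [← hy]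
        _ = (N x - 1/2) ^ 2 * (4 * Real.sqrt (2 + h x ^ 2) ^ 2) := by ring
        _ = (N x - 1/2) ^ 2 * (4 * (2 + h x ^ 2)) := by rw [hr2]
    linear_combination hysq
  have hDpos : ∀ x : ℝ, 0 < 4 * (N x * (1 - N x)) := fun x => by
    have := hN01 x; nlinarith [this.1, this.2]
  have hsq' : ∀ x : ℝ, h x ^ 2 = 8 * (N x - 1/2) ^ 2 / (4 * (N x * (1 - N x))) := fun x => by
    rw [eq_div_iff (hDpos x).ne']; exact hsqmul x
  -- measurability
  have hNmeas : Measurable N := by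
    have : N = Nstd := funext hNeq
    rw [this]; exact Nstd_mono.measurable
  have hgm : Measurable fun x => ENNReal.ofReal (h x ^ 2) := by
    have heq : (fun x => ENNReal.ofReal (h x ^ 2))
        = fun x => ENNReal.ofReal (8 * (N x - 1/2) ^ 2 / (4 * (N x * (1 - N x)))) :=
      funext fun x => by rw [hsq' x]
    rw [heq]
    apply ENNReal.measurable_ofReal.comp
    fun_prop
  -- push forward
  have hmap := hW s hs0
  have hWm : AEMeasurable (W s) P := by
    by_contra hc
    rw [Measure.map_of_not_aemeasurable hc] at hmap
    have h1 : (gaussianReal 0 s.toNNReal) Set.univ = 1 := measure_univ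
    rw [← hmap] at h1
    simp at h1
  have key : ∫⁻ ω, ENNReal.ofReal (h (W s ω) ^ 2) ∂P
      = ∫⁻ x, ENNReal.ofReal (h x ^ 2) ∂(gaussianReal 0 s.toNNReal) := by
    rw [← hmap, lintegral_map' hgm.aemeasurable hWm]
  rw [key]
  have hv : s.toNNReal ≠ 0 := by
    simp only [ne_eq, Real.toNNReal_eq_zero, not_le]
    linarith
  rw [gaussianReal_of_var_ne_zero 0 hv,
    lintegral_withDensity_eq_lintegral_mul volume (measurable_gaussianPDF 0 s.toNNReal) hgm]
  -- constants
  obtain ⟨c, hcpos, hcdef⟩ : ∃ c : ℝ, 0 < c ∧ c = Nstd 1 - 1/2 :=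
    ⟨Nstd 1 - 1/2, by have := Nstd_one_gt; linarith, rfl⟩
  have hss : (0:ℝ) < Real.sqrt s := Real.sqrt_pos.2 (by linarith)
  have hKpos : (0:ℝ) < 2 * c ^ 2 / Real.sqrt s := by positivity
  -- pointwise lower bound on Ioi 1
  have hbound : ∀ x ∈ Ioi (1:ℝ), ENNReal.ofReal (2 * c ^ 2 / Real.sqrt s)
      ≤ (gaussianPDF 0 s.toNNReal * fun x => ENNReal.ofReal (h x ^ 2)) x := by
    intro x hx
    have hx1 : (1:ℝ) ≤ x := hx.out.le
    have hx0 : (0:ℝ) < x := by linarith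
    have hphix : 0 < phi x := phi_pos x
    obtain ⟨hNx0, hNx1⟩ := hN01 x
    have hux : c ≤ N x - 1/2 := by
      have hm := Nstd_mono hx1
      rw [hNeq, hcdef]; linarith
    have htail : 1 - N x ≤ phi x / x := by
      have h1 := Nstd_add_tail x
      have h2 := tail_le_phi_div x hx1
      rw [hNeq]; linarith
    have hDle : 4 * (N x * (1 - N x)) ≤ 4 * (phi x / x) := by nlinarith
    have hsq2 : 2 * c ^ 2 * x / phi x ≤ h x ^ 2 := by
      rw [hsq' x]
      have h8 : 8 * c ^ 2 ≤ 8 * (N x - 1/2) ^ 2 := by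
        nlinarith [mul_nonneg (sub_nonneg.2 hux) (by linarith : (0:ℝ) ≤ N x - 1/2 + c)]
      calc 2 * c ^ 2 * x / phi x = 8 * c ^ 2 / (4 * (phi x / x)) := by
            field_simp
            ring
        _ ≤ 8 * c ^ 2 / (4 * (N x * (1 - N x))) := by
            apply div_le_div_of_nonneg_left (by positivity) (hDpos x) hDle
        _ ≤ 8 * (N x - 1/2) ^ 2 / (4 * (N x * (1 - N x))) :=
            (div_le_div_iff_of_pos_right (hDpos x)).2 h8
    have hpdf : phi x / Real.sqrt s ≤ gaussianPDFReal 0 s.toNNReal x := by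
      rw [gaussianPDFReal]
      have hcoe : ((s.toNNReal : ℝ)) = s := Real.coe_toNNReal s hs0
      rw [hcoe]
      have hsqrt : Real.sqrt (2 * Real.pi * s) = Real.sqrt (2 * Real.pi) * Real.sqrt s :=
        Real.sqrt_mul (by positivity) s
      have hexp : Real.exp (-x ^ 2 / 2) ≤ Real.exp (-(x - 0) ^ 2 / (2 * s)) := by
        apply Real.exp_le_exp.2
        rw [sub_zero, neg_div, neg_div, neg_le_neg_iff]
        rw [div_le_div_iff₀ (by positivity) (by norm_num)]
        nlinarith [sq_nonneg x]
      calc phi x / Real.sqrt s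
          = (Real.sqrt (2 * Real.pi) * Real.sqrt s)⁻¹ * Real.exp (-x ^ 2 / 2) := by
            simp only [phi, mul_inv]
            ring
        _ ≤ (Real.sqrt (2 * Real.pi * s))⁻¹ * Real.exp (-(x - 0) ^ 2 / (2 * s)) := by
            rw [hsqrt]
            exact mul_le_mul_of_nonneg_left hexp (by positivity)
    have hreal : 2 * c ^ 2 / Real.sqrt s ≤ gaussianPDFReal 0 s.toNNReal x * h x ^ 2 := by
      calc 2 * c ^ 2 / Real.sqrt s ≤ 2 * c ^ 2 * x / Real.sqrt s := by
            have hnum : 2 * c ^ 2 ≤ 2 * c ^ 2 * x := by nlinarith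
            exact (div_le_div_iff_of_pos_right hss).2 hnum
        _ = (phi x / Real.sqrt s) * (2 * c ^ 2 * x / phi x) := by
            field_simp
        _ ≤ gaussianPDFReal 0 s.toNNReal x * h x ^ 2 := by
            apply mul_le_mul hpdf hsq2 (by positivity) (gaussianPDFReal_nonneg 0 s.toNNReal x)
    calc ENNReal.ofReal (2 * c ^ 2 / Real.sqrt s)
        ≤ ENNReal.ofReal (gaussianPDFReal 0 s.toNNReal x * h x ^ 2) :=
          ENNReal.ofReal_le_ofReal hreal
      _ = gaussianPDF 0 s.toNNReal x * ENNReal.ofReal (h x ^ 2) := by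
          rw [ENNReal.ofReal_mul (gaussianPDFReal_nonneg 0 s.toNNReal x)]
          rfl
      _ = (gaussianPDF 0 s.toNNReal * fun x => ENNReal.ofReal (h x ^ 2)) x := rfl
  refine top_unique ?_
  calc (⊤ : ℝ≥0∞) = ∫⁻ (_x : ℝ) in Ioi (1:ℝ), ENNReal.ofReal (2 * c ^ 2 / Real.sqrt s) ∂volume := by
        rw [setLIntegral_const, Real.volume_Ioi, ENNReal.mul_top]
        · simp only [ne_eq, ENNReal.ofReal_eq_zero, not_le]
          exact hKpos
    _ ≤ ∫⁻ x in Ioi (1:ℝ), (gaussianPDF 0 s.toNNReal * fun x => ENNReal.ofReal (h x ^ 2)) x ∂volume :=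
        setLIntegral_mono' measurableSet_Ioi hbound
    _ ≤ ∫⁻ x, (gaussianPDF 0 s.toNNReal * fun x => ENNReal.ofReal (h x ^ 2)) x ∂volume :=
        setLIntegral_le_lintegral _ _
end

section
/- Let W be a standard Brownian motion and h = F^{-1} ∘ N as above. Then for every t > 1, E[∫₀ᵗ h(W_s)² ds] = ∞; hence the process s ↦ h(W_s) is not locally square integrable (not in H²), even though h is continuous (so the process is pathwise locally square integrable). -/
open MeasureTheory ProbabilityTheory Real Set Filter Topology
open scoped NNReal ENNReal

noncomputable def phiBM (t : ℝ) : ℝ := (Real.sqrt (2 * Real.pi))⁻¹ * Real.exp (-t ^ 2 / 2)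

lemma phiBM_eq : phiBM = fun t : ℝ => (Real.sqrt (2 * Real.pi))⁻¹ * Real.exp (-(1/2) * t ^ 2) := by
  funext t; unfold phiBM; ring_nf

lemma phiBM_nonneg (t : ℝ) : 0 ≤ phiBM t := by
  unfold phiBM; positivity

lemma phiBM_integrable : Integrable phiBM := by
  rw [phiBM_eq]
  exact (integrable_exp_neg_mul_sq (by norm_num : (0:ℝ) < 1/2)).const_mul _

lemma sqrt_two_pi_pos : 0 < Real.sqrt (2 * Real.pi) :=
  Real.sqrt_pos.mpr (by positivity)

lemma phiBM_integral_eq_one : ∫ t, phiBM t = 1 := by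
  rw [phiBM_eq, integral_const_mul, integral_gaussian]
  rw [show Real.pi / (1/2) = 2 * Real.pi by ring]
  exact inv_mul_cancel₀ (ne_of_gt sqrt_two_pi_pos)

lemma N_continuous {N : ℝ → ℝ} (hN : ∀ x, N x = ∫ t in Iic x, phiBM t) : Continuous N := by
  have : N = fun x => (∫ s in (0:ℝ)..x, phiBM s) + N 0 := by
    funext x
    have h := intervalIntegral.integral_Iic_sub_Iic (f := phiBM) (μ := volume) (a := (0:ℝ)) (b := x)
      phiBM_integrable.integrableOn phiBM_integrable.integrableOn
    rw [hN x, hN 0]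
    linarith [h]
  rw [this]
  exact (phiBM_integrable.continuous_primitive 0).add continuous_const

lemma integral_Ioi_mul_exp : ∀ x : ℝ, ∫ t in Ioi x, t * Real.exp (-t^2/2) = Real.exp (-x^2/2) := by
  intro x
  have hderiv : ∀ t ∈ Ici x, HasDerivAt (fun t : ℝ => -Real.exp (-t^2/2))
      (t * Real.exp (-t^2/2)) t := by
    intro t _
    have h1 : HasDerivAt (fun t : ℝ => -t^2/2) (-t) t := by
      have h := ((hasDerivAt_pow 2 t).div_const 2).neg
      have heq : (fun t : ℝ => -t^2/2) = fun t : ℝ => -(t^2/2) := by funext s; ring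
      rw [heq]
      exact h.congr_deriv (by norm_num)
    have h2 := (h1.exp).neg
    exact h2.congr_deriv (by ring)
  have hint : IntegrableOn (fun t : ℝ => t * Real.exp (-t^2/2)) (Ioi x) := by
    have h : Integrable (fun t : ℝ => t * Real.exp (-(1/2) * t^2)) :=
      integrable_mul_exp_neg_mul_sq (by norm_num)
    have heq : (fun t : ℝ => t * Real.exp (-t^2/2)) = fun t : ℝ => t * Real.exp (-(1/2) * t^2) := by
      funext s; ring_nf
    rw [heq]
    exact h.integrableOn
  have htend : Tendsto (fun t : ℝ => -Real.exp (-t^2/2)) atTop (𝓝 0) := by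
    have h1 : Tendsto (fun t : ℝ => -t^2/2) atTop atBot := by
      have heq : (fun t : ℝ => -t^2/2) = fun t : ℝ => (-(1/2)) * t^2 := by funext s; ring
      rw [heq]
      exact (tendsto_pow_atTop two_ne_zero).const_mul_atTop_of_neg (by norm_num)
    have := Real.tendsto_exp_atBot.comp h1
    simpa using this.neg
  have := integral_Ioi_of_hasDerivAt_of_tendsto' hderiv hint htend
  rw [this]; ring

lemma tail_bound {N : ℝ → ℝ} (hN : ∀ x, N x = ∫ t in Iic x, phiBM t) {x : ℝ} (hx : 0 < x) :
    1 - N x ≤ phiBM x / x := by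
  have h1 : N x + ∫ t in Ioi x, phiBM t = 1 := by
    have h := integral_add_compl (measurableSet_Iic (a := x)) phiBM_integrable
    rw [compl_Iic, phiBM_integral_eq_one] at h
    rw [hN x]; linarith
  have hint2 : IntegrableOn (fun t : ℝ => (t/x) * phiBM t) (Ioi x) := by
    have h : Integrable (fun t : ℝ =>
        (x⁻¹ * (Real.sqrt (2*Real.pi))⁻¹) * (t * Real.exp (-(1/2) * t^2))) :=
      (integrable_mul_exp_neg_mul_sq (by norm_num)).const_mul _
    have heq : (fun t : ℝ => (t/x) * phiBM t) = fun t : ℝ =>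
        (x⁻¹ * (Real.sqrt (2*Real.pi))⁻¹) * (t * Real.exp (-(1/2) * t^2)) := by
      funext s; unfold phiBM; ring_nf
    rw [heq]
    exact h.integrableOn
  have h2 : (∫ t in Ioi x, phiBM t) ≤ ∫ t in Ioi x, (t/x) * phiBM t := by
    apply setIntegral_mono_on phiBM_integrable.integrableOn hint2 measurableSet_Ioi
    intro t ht
    have h1t : (1:ℝ) ≤ t / x := (one_le_div hx).2 (le_of_lt ht)
    nlinarith [phiBM_nonneg t]
  have h3 : ∫ t in Ioi x, (t/x) * phiBM t = phiBM x / x := by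
    have heq : ∀ t ∈ Ioi x, (t/x) * phiBM t =
        (x⁻¹ * (Real.sqrt (2*Real.pi))⁻¹) * (t * Real.exp (-t^2/2)) := by
      intro t _; unfold phiBM; ring
    rw [setIntegral_congr_fun measurableSet_Ioi heq, integral_const_mul, integral_Ioi_mul_exp]
    unfold phiBM; ring
  rw [h3] at h2
  linarith

lemma gauss_lintegral_top {G : ℝ → ℝ} (hGcont : Continuous G) (hGnonneg : ∀ x, 0 ≤ G x)
    (hGlb : ∀ x : ℝ, 2 ≤ x → x * Real.sqrt (2*Real.pi) * Real.exp (x^2/2) / 8 ≤ G x)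
    {v : ℝ≥0} (hv : 1 ≤ (v:ℝ)) :
    ∫⁻ x, ENNReal.ofReal (G x) ∂(gaussianReal 0 v) = ⊤ := by
  have hv0 : v ≠ 0 := by
    intro h; rw [h] at hv; norm_num at hv
  have hvpos : (0:ℝ) < (v:ℝ) := lt_of_lt_of_le one_pos hv
  have hGmeas : Measurable fun x => ENNReal.ofReal (G x) := hGcont.measurable.ennreal_ofReal
  rw [gaussianReal_of_var_ne_zero 0 hv0,
    lintegral_withDensity_eq_lintegral_mul volume (measurable_gaussianPDF 0 v) hGmeas]
  refine top_le_iff.mp ?_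
  have hB : (1:ℝ) ≤ Real.sqrt v := by
    rw [show (1:ℝ) = Real.sqrt 1 by simp]
    exact Real.sqrt_le_sqrt hv
  have hBpos : (0:ℝ) < Real.sqrt v := lt_of_lt_of_le one_pos hB
  have hkey : ∀ x : ℝ, 2 ≤ x →
      ENNReal.ofReal (1/(4 * Real.sqrt v)) ≤
        (gaussianPDF 0 v * fun x => ENNReal.ofReal (G x)) x := by
    intro x hx
    have hpdfr : gaussianPDFReal 0 v x =
        (Real.sqrt (2*Real.pi) * Real.sqrt v)⁻¹ * Real.exp (-x^2/(2*v)) := by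
      unfold gaussianPDFReal
      rw [show 2 * Real.pi * (v:ℝ) = (2 * Real.pi) * (v:ℝ) by ring,
        Real.sqrt_mul (by positivity)]
      ring_nf
    have hpdfnn : 0 ≤ gaussianPDFReal 0 v x := (gaussianPDFReal_pos 0 v x hv0).le
    simp only [Pi.mul_apply, gaussianPDF]
    rw [← ENNReal.ofReal_mul hpdfnn]
    apply ENNReal.ofReal_le_ofReal
    calc 1/(4 * Real.sqrt v) ≤ (x/(8 * Real.sqrt v)) * Real.exp (x^2/2 - x^2/(2*v)) := by
          have hexp : (1:ℝ) ≤ Real.exp (x^2/2 - x^2/(2*v)) := by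
            apply Real.one_le_exp
            have : x^2/(2*v) ≤ x^2/2 := by
              apply div_le_div_of_nonneg_left (sq_nonneg x) (by norm_num)
              linarith
            linarith
          have hxpos : (0:ℝ) < x := by linarith
          have h1 : 1/(4 * Real.sqrt v) ≤ x/(8 * Real.sqrt v) := by
            rw [div_le_div_iff₀ (by positivity) (by positivity)]
            nlinarith
          calc 1/(4 * Real.sqrt v) ≤ x/(8 * Real.sqrt v) := h1
            _ = (x/(8 * Real.sqrt v)) * 1 := by ring
            _ ≤ (x/(8 * Real.sqrt v)) * Real.exp (x^2/2 - x^2/(2*v)) := by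
                apply mul_le_mul_of_nonneg_left hexp (by positivity)
      _ = gaussianPDFReal 0 v x * (x * Real.sqrt (2*Real.pi) * Real.exp (x^2/2) / 8) := by
          rw [hpdfr, show x^2/2 - x^2/(2*(v:ℝ)) = x^2/2 + (-x^2/(2*(v:ℝ))) by ring,
            Real.exp_add]
          have hA : Real.sqrt (2*Real.pi) ≠ 0 := ne_of_gt sqrt_two_pi_pos
          have hB' : Real.sqrt (v:ℝ) ≠ 0 := ne_of_gt hBpos
          field_simp
      _ ≤ gaussianPDFReal 0 v x * G x := by
          apply mul_le_mul_of_nonneg_left (hGlb x hx) hpdfnn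
  calc (⊤:ℝ≥0∞) = ENNReal.ofReal (1/(4 * Real.sqrt v)) * volume (Ici (2:ℝ)) := by
        rw [Real.volume_Ici, ENNReal.mul_top (by
          simp only [ne_eq, ENNReal.ofReal_eq_zero, not_le]
          positivity)]
    _ = ∫⁻ _ in Ici (2:ℝ), ENNReal.ofReal (1/(4 * Real.sqrt v)) := (setLIntegral_const _ _).symm
    _ ≤ ∫⁻ x in Ici (2:ℝ), (gaussianPDF 0 v * fun x => ENNReal.ofReal (G x)) x :=
        setLIntegral_mono ((measurable_gaussianPDF 0 v).mul hGmeas) fun x hx => hkey x hx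
    _ ≤ ∫⁻ x, (gaussianPDF 0 v * fun x => ENNReal.ofReal (G x)) x :=
        setLIntegral_le_lintegral _ _

lemma exists_measurable_modification {Ω : Type*} [MeasurableSpace Ω] (P : Measure Ω)
    (W : ℝ → Ω → ℝ) (hcont : ∀ ω, Continuous fun s => W s ω)
    (hmeas : ∀ s : ℝ, AEMeasurable (W s) P) :
    ∃ (V : ℝ → Ω → ℝ) (Z : Set Ω), Measurable (Function.uncurry V) ∧
      (∀ ω, Continuous fun s => V s ω) ∧ MeasurableSet Z ∧ P Z = 0 ∧
      ∀ ω ∉ Z, ∀ s, V s ω = W s ω := by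
  classical
  set g : ℚ → Ω → ℝ := fun q => (hmeas q).mk (W q) with hg
  have hgm : ∀ q : ℚ, Measurable (g q) := fun q => (hmeas q).measurable_mk
  set Z : Set Ω := ⋃ q : ℚ, toMeasurable P {ω | W q ω ≠ g q ω} with hZ
  have hZm : MeasurableSet Z := MeasurableSet.iUnion fun q => measurableSet_toMeasurable _ _
  have hZ0 : P Z = 0 := by
    apply measure_iUnion_null
    intro q
    rw [measure_toMeasurable]
    exact ae_iff.mp (hmeas q).ae_eq_mk
  set V : ℝ → Ω → ℝ := fun s ω => if ω ∈ Z then 0 else W s ω with hV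
  have hVW : ∀ ω ∉ Z, ∀ s, V s ω = W s ω := fun ω hω s => if_neg hω
  have hVcont : ∀ ω, Continuous fun s => V s ω := by
    intro ω
    by_cases hω : ω ∈ Z
    · simp only [hV, if_pos hω]; exact continuous_const
    · simp only [hV, if_neg hω]; exact hcont ω
  have hVs : ∀ s : ℝ, Measurable (V s) := by
    intro s
    have hq : ∀ n : ℕ, ∃ q : ℚ, |s - (q:ℝ)| < 1/(n+1) := fun n => exists_rat_near s (by positivity)
    choose q hq' using hq
    have hqt : Tendsto (fun n => ((q n : ℝ))) atTop (𝓝 s) := by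
      have h0 : Tendsto (fun n : ℕ => 1/((n:ℝ)+1)) atTop (𝓝 0) :=
        tendsto_one_div_add_atTop_nhds_zero_nat
      rw [tendsto_iff_dist_tendsto_zero]
      apply squeeze_zero (fun n => dist_nonneg) (fun n => ?_) h0
      rw [Real.dist_eq, abs_sub_comm]
      exact (hq' n).le
    have hlim : ∀ ω, Tendsto (fun n => if ω ∈ Z then 0 else g (q n) ω) atTop (𝓝 (V s ω)) := by
      intro ω
      by_cases hω : ω ∈ Z
      · simp only [if_pos hω, hV]
        exact tendsto_const_nhds
      · simp only [if_neg hω, hV]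
        have hωq : ∀ p : ℚ, g p ω = W p ω := by
          intro p
          by_contra hc
          exact hω (mem_iUnion.mpr ⟨p, subset_toMeasurable _ _ (by simpa [eq_comm] using hc)⟩)
        simp_rw [hωq]
        exact ((hcont ω).tendsto s).comp hqt
    exact measurable_of_tendsto_metrizable
      (fun n => Measurable.ite hZm measurable_const (hgm (q n)))
      (tendsto_pi_nhds.mpr hlim)
  exact ⟨V, Z, measurable_uncurry_of_continuous_of_measurable hVcont hVs, hVcont, hZm, hZ0, hVW⟩

theorem bm_h_not_H2
    {Ω : Type*} [MeasurableSpace Ω] (P : Measure Ω) [IsProbabilityMeasure P]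
    (W : ℝ → Ω → ℝ)
    (hW : ∀ s : ℝ, 0 ≤ s → Measure.map (W s) P = gaussianReal 0 (Real.toNNReal s))
    (hWcont : ∀ ω, Continuous (fun s => W s ω))
    (N : ℝ → ℝ)
    (hN : ∀ x : ℝ, N x = ∫ t in Set.Iic x, (Real.sqrt (2 * Real.pi))⁻¹ * Real.exp (-t ^ 2 / 2))
    (F : ℝ → ℝ)
    (hF : ∀ x : ℝ, F x = 1 / 2 + x / (2 * Real.sqrt (2 + x ^ 2)))
    (h : ℝ → ℝ)
    (hh : ∀ x : ℝ, F (h x) = N x) :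
    ∀ t : ℝ, 1 < t →
      (∫⁻ ω, (∫⁻ s in Set.Icc (0 : ℝ) t, ENNReal.ofReal ((h (W s ω)) ^ 2) ∂(volume : Measure ℝ)) ∂P) = ⊤ ∧
      ∀ ω, IntervalIntegrable (fun s => (h (W s ω)) ^ 2) volume 0 t := by
  intro t ht
  have hNphi : ∀ x, N x = ∫ s in Iic x, phiBM s := by intro x; rw [hN x]; rfl
  have hNcont : Continuous N := N_continuous hNphi
  have key : ∀ x : ℝ, (2*N x - 1)^2 < 1 ∧ (h x)^2 * (1 - (2*N x - 1)^2) = 2*(2*N x - 1)^2 := by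
    intro x
    have hr2 : (0:ℝ) < 2 + (h x)^2 := by positivity
    have hrsq : Real.sqrt (2 + (h x)^2) ^ 2 = 2 + (h x)^2 := Real.sq_sqrt hr2.le
    have hrpos : 0 < Real.sqrt (2 + (h x)^2) := Real.sqrt_pos.mpr hr2
    have e1 : 1/2 + (h x)/(2 * Real.sqrt (2 + (h x)^2)) = N x := by
      rw [← hF (h x)]; exact hh x
    have e2 : h x = (N x - 1/2) * (2 * Real.sqrt (2 + (h x)^2)) := by
      have e3 : h x / (2 * Real.sqrt (2 + (h x)^2)) = N x - 1/2 := by linarith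
      rw [div_eq_iff (by positivity)] at e3
      linarith
    have hu : (2*N x - 1) * Real.sqrt (2 + (h x)^2) = h x := by linear_combination -e2
    have husq : (2*N x - 1)^2 * (2 + (h x)^2) = (h x)^2 := by
      have hc := congrArg (·^2) hu
      simpa [mul_pow, hrsq] using hc
    constructor
    · nlinarith [husq, sq_nonneg (h x), sq_nonneg (2*N x - 1)]
    · linear_combination -husq
  set G : ℝ → ℝ := fun x => 2*(2*N x - 1)^2/(1 - (2*N x - 1)^2) with hGdef
  have hGpos : ∀ x, 0 < 1 - (2*N x - 1)^2 := fun x => by linarith [(key x).1]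
  have hhG : ∀ x, (h x)^2 = G x := by
    intro x
    simp only [hGdef]
    rw [eq_div_iff (ne_of_gt (hGpos x))]
    exact (key x).2
  have hGcont : Continuous G := by
    apply Continuous.div
    · exact continuous_const.mul (((continuous_const.mul hNcont).sub continuous_const).pow 2)
    · exact continuous_const.sub (((continuous_const.mul hNcont).sub continuous_const).pow 2)
    · exact fun x => ne_of_gt (hGpos x)
  have hGnonneg : ∀ x, 0 ≤ G x := fun x => (hhG x) ▸ sq_nonneg (h x)
  have part2 : ∀ ω, IntervalIntegrable (fun s => (h (W s ω))^2) volume 0 t := by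
    intro ω
    have heq : (fun s => (h (W s ω))^2) = fun s => G (W s ω) := funext fun s => hhG _
    rw [heq]
    exact (hGcont.comp (hWcont ω)).intervalIntegrable 0 t
  have hGlb : ∀ x : ℝ, 2 ≤ x → x * Real.sqrt (2*Real.pi) * Real.exp (x^2/2) / 8 ≤ G x := by
    intro x hx
    have hxpos : (0:ℝ) < x := by linarith
    have htail := tail_bound hNphi hxpos
    have hphix : 0 < phiBM x := by unfold phiBM; positivity
    have hsqrt2 : (2:ℝ) ≤ Real.sqrt (2*Real.pi) := by
      nlinarith [Real.sq_sqrt (by positivity : (0:ℝ) ≤ 2*Real.pi),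
        Real.sqrt_nonneg (2*Real.pi), Real.pi_gt_three]
    have hexple : Real.exp (-x^2/2) ≤ 1 := by
      rw [Real.exp_le_one_iff]
      nlinarith
    have hphile : phiBM x ≤ 1/2 := by
      unfold phiBM
      have hinv : (Real.sqrt (2*Real.pi))⁻¹ ≤ 1/2 := by
        rw [show (1:ℝ)/2 = 2⁻¹ by norm_num]
        exact inv_anti₀ (by norm_num) hsqrt2
      nlinarith [Real.exp_pos (-x^2/2), (Real.exp_pos (-x^2/2)).le,
        inv_nonneg.mpr sqrt_two_pi_pos.le]
    have hNge : 3/4 ≤ N x := by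
      have h1 : phiBM x / x ≤ (1/2)/2 :=
        div_le_div₀ (by norm_num) hphile (by norm_num) hx
      linarith
    have hu1 : (2*N x - 1)^2 < 1 := (key x).1
    have huge : 1/2 ≤ 2*N x - 1 := by linarith
    have hult : 2*N x - 1 < 1 := by nlinarith [sq_nonneg (2*N x - 1 - 1)]
    have hNlt : N x < 1 := by linarith
    have hNpos : 0 < 1 - N x := by linarith
    have hG1 : 1/(8*(1-N x)) ≤ G x := by
      simp only [hGdef]
      rw [div_le_div_iff₀ (by linarith) (hGpos x)]
      have hprod : (0:ℝ) ≤ (1 - (2*N x - 1)) * (8*(2*N x - 1)^2 - (2*N x - 1) - 1) := by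
        apply mul_nonneg (by linarith)
        nlinarith
      nlinarith [hprod]
    have hG2 : x/(8 * phiBM x) ≤ 1/(8*(1-N x)) := by
      rw [div_le_div_iff₀ (by positivity) (by linarith)]
      have h2 := (le_div_iff₀ hxpos).mp htail
      nlinarith
    have hfinal : x * Real.sqrt (2*Real.pi) * Real.exp (x^2/2) / 8 = x/(8 * phiBM x) := by
      unfold phiBM
      rw [show -x^2/2 = -(x^2/2) by ring, Real.exp_neg]
      have hA : Real.sqrt (2*Real.pi) ≠ 0 := ne_of_gt sqrt_two_pi_pos
      have hE : Real.exp (x^2/2) ≠ 0 := Real.exp_ne_zero _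
      field_simp
    rw [hfinal]
    linarith
  have hWae : ∀ s : ℝ, AEMeasurable (W (max s 0)) P := by
    intro s
    by_contra hc
    have h0 := Measure.map_of_not_aemeasurable hc
    rw [hW (max s 0) (le_max_right s 0)] at h0
    have h1 := congrArg (fun μ : Measure ℝ => μ Set.univ) h0
    simp at h1
  obtain ⟨V, Z, hVmeas, hVcont, hZm, hZ0, hVW⟩ :=
    exists_measurable_modification P (fun s ω => W (max s 0) ω)
      (fun ω => (hWcont ω).comp (continuous_id.max continuous_const)) hWae
  refine ⟨?_, part2⟩
  have hZae : ∀ᵐ ω ∂P, ω ∉ Z := by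
    rw [ae_iff]
    simpa using hZ0
  have step1 : ∀ᵐ ω ∂P,
      (∫⁻ s in Icc (0:ℝ) t, ENNReal.ofReal ((h (W s ω))^2) ∂(volume : Measure ℝ)) =
        ∫⁻ s in Icc (0:ℝ) t, ENNReal.ofReal (G (V s ω)) ∂(volume : Measure ℝ) := by
    filter_upwards [hZae] with ω hω
    apply setLIntegral_congr_fun measurableSet_Icc
    intro s hs
    beta_reduce
    rw [hhG (W s ω), hVW ω hω s, max_eq_left hs.1]
  rw [lintegral_congr_ae step1]
  have hmeas_unc : Measurable (Function.uncurry fun ω s => ENNReal.ofReal (G (V s ω))) := by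
    have heq : Function.uncurry (fun (ω : Ω) (s : ℝ) => ENNReal.ofReal (G (V s ω))) =
        (fun p : ℝ × Ω => ENNReal.ofReal (G (Function.uncurry V p))) ∘ Prod.swap := rfl
    rw [heq]
    exact ((hGcont.measurable.ennreal_ofReal).comp hVmeas).comp measurable_swap
  rw [lintegral_lintegral_swap hmeas_unc.aemeasurable]
  have inner_eq : ∀ s : ℝ, s ∈ Icc (1:ℝ) t →
      (∫⁻ ω, ENNReal.ofReal (G (V s ω)) ∂P) = ⊤ := by
    intro s hs
    have hs0 : (0:ℝ) ≤ s := le_trans zero_le_one hs.1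
    have hVsm : Measurable (V s) := hVmeas.comp measurable_prodMk_left
    have hVaeW : V s =ᵐ[P] W s := by
      filter_upwards [hZae] with ω hω
      rw [hVW ω hω s, max_eq_left hs0]
    rw [← lintegral_map hGcont.measurable.ennreal_ofReal hVsm, Measure.map_congr hVaeW,
      hW s hs0]
    exact gauss_lintegral_top hGcont hGnonneg hGlb
      (by rw [Real.coe_toNNReal s hs0]; exact hs.1)
  refine top_le_iff.mp ?_
  calc (⊤:ℝ≥0∞) = ∫⁻ _ in Icc (1:ℝ) t, (⊤:ℝ≥0∞) ∂(volume : Measure ℝ) := by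
        rw [setLIntegral_const, Real.volume_Icc, ENNReal.top_mul (by
          simp only [ne_eq, ENNReal.ofReal_eq_zero, not_le]
          linarith)]
    _ = ∫⁻ s in Icc (1:ℝ) t, ∫⁻ ω, ENNReal.ofReal (G (V s ω)) ∂P ∂(volume : Measure ℝ) := by
        apply setLIntegral_congr_fun measurableSet_Icc
        intro s hs
        exact (inner_eq s hs).symm
    _ ≤ ∫⁻ s in Icc (0:ℝ) t, ∫⁻ ω, ENNReal.ofReal (G (V s ω)) ∂P ∂(volume : Measure ℝ) :=
        lintegral_mono_set (Icc_subset_Icc (by linarith) le_rfl)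
end
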